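/- Let (Q, +) be a finite abelian group, φ, ψ automorphisms, a ∈ Q, and A(x,y) = φ(x) + ψ(y) + a. Then A is orthogonal to its (13)-parastrophe if and only if the map x ↦ x + φ(x) is a bijection of Q. -/

import Mathlib

/-!
Solving `p13 x y = d` for `x` gives `x = A d y`, so a system `A x y = c, p13 x y = d` has exactly
as many solutions as the equation `A (A d y) y = c` in `y`. For a T-quasigroup
`A (A d y) y = f (ψ y) + φ (φ d + a) + a` with `f x = x + φ x`, so all these equations are uniquely
solvable iff `f` is a bijection.
-/

open Function

def Orthogonal {α : Type*} (A B : α → α → α) : Prop :=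
  ∀ c d : α, ∃! p : α × α, A p.1 p.2 = c ∧ B p.1 p.2 = d

section Parastrophe

variable {α : Type*} {A p13 : α → α → α}

theorem parastrophe_eq_iff (h1 : ∀ x y, A (p13 x y) y = x) (hA : ∀ y, Injective (A · y))
    {x y d : α} : p13 x y = d ↔ x = A d y := by
  constructor
  · rintro rfl
    exact (h1 x y).symm
  · rintro rfl
    exact hA y (h1 _ y)

theorem existsUnique_prod_fst_eq_iff {β : Type*} (g : β → α) (P : β → Prop) :
    (∃! p : α × β, p.1 = g p.2 ∧ P p.2) ↔ ∃! y, P y := by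
  constructor
  · rintro ⟨⟨x, y⟩, ⟨-, hy⟩, huniq⟩
    refine ⟨y, hy, fun y' hy' => ?_⟩
    exact congrArg Prod.snd (huniq (g y', y') ⟨rfl, hy'⟩)
  · rintro ⟨y, hy, huniq⟩
    refine ⟨(g y, y), ⟨rfl, hy⟩, ?_⟩
    rintro ⟨x', y'⟩ ⟨hx : x' = g y', hy'⟩
    rw [hx, huniq y' hy']

theorem orthogonal_parastrophe_iff (h1 : ∀ x y, A (p13 x y) y = x)
    (hA : ∀ y, Injective (A · y)) :
    Orthogonal A p13 ↔ ∀ d, Bijective fun y => A (A d y) y := by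
  have hsystem : ∀ c d x y, (A x y = c ∧ p13 x y = d) ↔ (x = A d y ∧ A (A d y) y = c) := by
    intro c d x y
    rw [parastrophe_eq_iff h1 hA]
    constructor
    · rintro ⟨hc, rfl⟩
      exact ⟨rfl, hc⟩
    · rintro ⟨rfl, hc⟩
      exact ⟨hc, rfl⟩
  simp only [bijective_iff_existsUnique]
  refine forall_comm.trans (forall_congr' fun d => forall_congr' fun c => ?_)
  simp only [hsystem]
  exact existsUnique_prod_fst_eq_iff (A d) fun y => A (A d y) y = c

end Parastrophe

section TQuasigroup

variable {Q : Type*} [AddCommGroup Q] (φ ψ : Q ≃+ Q) (a : Q)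

def tQuasigroup (x y : Q) : Q := φ x + ψ y + a

theorem tQuasigroup_left_injective (y : Q) : Injective (tQuasigroup φ ψ a · y) := by
  intro x x' h
  simpa [tQuasigroup] using h

theorem tQuasigroup_tQuasigroup_left (d y : Q) :
    tQuasigroup φ ψ a (tQuasigroup φ ψ a d y) y = ψ y + φ (ψ y) + (φ (φ d + a) + a) := by
  simp only [tQuasigroup, map_add]
  abel

theorem bijective_tQuasigroup_tQuasigroup_left_iff (d : Q) :
    (Bijective fun y => tQuasigroup φ ψ a (tQuasigroup φ ψ a d y) y) ↔
      Bijective fun x => x + φ x := by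
  simp only [tQuasigroup_tQuasigroup_left]
  exact (EquivLike.comp_bijective (fun y => ψ y + φ (ψ y)) (Equiv.addRight _)).trans
    (EquivLike.bijective_comp ψ fun x => x + φ x)

end TQuasigroup

theorem T_orth_13_general {Q : Type*} [AddCommGroup Q] (φ ψ : Q ≃+ Q) (a : Q)
    (A p13 : Q → Q → Q) (hA : ∀ x y, A x y = φ x + ψ y + a)
    (h1 : ∀ x y, A (p13 x y) y = x) :
    (∀ c d : Q, ∃! p : Q × Q, A p.1 p.2 = c ∧ p13 p.1 p.2 = d) ↔
      Function.Bijective (fun x : Q => x + φ x) := by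
  obtain rfl : A = tQuasigroup φ ψ a := funext₂ hA
  change Orthogonal _ _ ↔ _
  simp only [orthogonal_parastrophe_iff h1 (tQuasigroup_left_injective φ ψ a),
    bijective_tQuasigroup_tQuasigroup_left_iff, forall_const]

/-- a T-quasigroup A(x,y) = φx + ψy + a is orthogonal to its (13)-parastrophe
iff x ↦ x + φx is a bijection. -/
theorem T_orth_13 {Q : Type*} [AddCommGroup Q] [Fintype Q] (φ ψ : Q ≃+ Q) (a : Q)
    (A p13 : Q → Q → Q) (hA : ∀ x y, A x y = φ x + ψ y + a)
    (h1 : ∀ x y, A (p13 x y) y = x) (h2 : ∀ x y, p13 (A x y) y = x) :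
    (∀ c d : Q, ∃! p : Q × Q, A p.1 p.2 = c ∧ p13 p.1 p.2 = d) ↔
      Function.Bijective (fun x : Q => x + φ x) :=
  T_orth_13_general φ ψ a A p13 hA h1
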